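/- Let M ⊆ ℍ^d be a totally geodesic submanifold. Under the geodesic projection π^G_M, every tangent vector v at a point x ∈ ℍ^d gets at least cosh(d_ℍ(x,M)) times shorter: ‖dπ^G_M(v)‖_ℍ ≤ ‖v‖_ℍ / cosh(d_ℍ(x,M)). -/

import Mathlib

noncomputable section

open Set

/-- Ambient Euclidean space `ℝ^d`. -/
abbrev E (d : ℕ) : Type := EuclideanSpace ℝ (Fin d)

/-- The open unit (Poincaré) ball `ℍ^d`. -/
def pball (d : ℕ) : Set (E d) := {x | ‖x‖ < 1}

/-- Inverse hyperbolic cosine. -/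
def arcosh (t : ℝ) : ℝ := Real.log (t + Real.sqrt (t ^ 2 - 1))

/-- Hyperbolic distance in the Poincaré ball model. -/
def dH {d : ℕ} (x y : E d) : ℝ :=
  arcosh (1 + 2 * ‖x - y‖ ^ 2 / ((1 - ‖x‖ ^ 2) * (1 - ‖y‖ ^ 2)))

/-- A unit-speed parameterized complete geodesic of the Poincaré ball. -/
def IsUnitSpeedGeodesic {d : ℕ} (γ : ℝ → E d) : Prop :=
  (∀ t, γ t ∈ pball d) ∧ ∀ s t : ℝ, dH (γ s) (γ t) = |s - t|

/-- A subset of the ball which is a complete geodesic line. -/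
def IsGeodesicLine {d : ℕ} (c : Set (E d)) : Prop :=
  ∃ γ : ℝ → E d, IsUnitSpeedGeodesic γ ∧ c = Set.range γ

/-- Totally geodesic subset of the Poincaré ball: it contains every complete geodesic
through any two of its points. -/
def TotGeodesic {d : ℕ} (M : Set (E d)) : Prop :=
  M ⊆ pball d ∧
    ∀ x ∈ M, ∀ y ∈ M, x ≠ y →
      ∀ c : Set (E d), IsGeodesicLine c → x ∈ c → y ∈ c → c ⊆ M

/-- Geodesic hull of a set `S` of points of the ball and/or ideal boundary points:
the smallest totally geodesic subset containing the ball-points of `S` and whose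
closure contains all of `S` (in particular the ideal points of `S`). -/
def GH {d : ℕ} (S : Set (E d)) : Set (E d) :=
  ⋂₀ {M : Set (E d) | TotGeodesic M ∧ S ∩ pball d ⊆ M ∧ S ⊆ closure M}

/-- Busemann function of the ideal point `p`. -/
def busemann {d : ℕ} (p x : E d) : ℝ := Real.log (‖p - x‖ ^ 2 / (1 - ‖x‖ ^ 2))

/-- Horosphere centered at the ideal point `p` passing through `x`. -/
def horosphere {d : ℕ} (p x : E d) : Set (E d) :=
  {y ∈ pball d | busemann p y = busemann p x}

/-- `S(x)`: intersection of the horospheres through `x` centered at the ideal points `p i`. -/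
def horoInter {d K : ℕ} (p : Fin K → E d) (x : E d) : Set (E d) :=
  ⋂ i, horosphere (p i) x

/-- Isometry of hyperbolic space (Poincaré ball model). -/
def IsHypIsometry {d : ℕ} (φ : E d → E d) : Prop :=
  Set.BijOn φ (pball d) (pball d) ∧
    ∀ x ∈ pball d, ∀ y ∈ pball d, dH (φ x) (φ y) = dH x y

/-- A rotation around `P`: an isometry of `ℍ^d` fixing every point of `P`. -/
def IsRotationAround {d : ℕ} (P : Set (E d)) (φ : E d → E d) : Prop :=
  IsHypIsometry φ ∧ ∀ q ∈ P, φ q = q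

/-- `m` is a nearest point of `M` to `x`. -/
def IsNearestPt {d : ℕ} (M : Set (E d)) (x m : E d) : Prop :=
  m ∈ M ∧ ∀ y ∈ M, dH x m ≤ dH x y

/-- `π` is the geodesic (closest-point) projection onto `M`. -/
def IsGeodProj {d : ℕ} (M : Set (E d)) (π : E d → E d) : Prop :=
  ∀ x ∈ pball d, IsNearestPt M x (π x)

/-- `π` is the horospherical projection determined by the base point `b` and the
ideal points `p 0, …, p (K-1)`: it sends `x` to the point of
`GH(b,p₁,…,p_K) ∩ S(x)` strictly closer to `b` (and fixes the spine pointwise). -/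
def IsHoroProj {d K : ℕ} (b : E d) (p : Fin K → E d) (π : E d → E d) : Prop :=
  ∀ x ∈ pball d,
    π x ∈ GH (insert b (Set.range p)) ∩ horoInter p x ∧
    (∀ z ∈ GH (insert b (Set.range p)) ∩ horoInter p x, z ≠ π x → dH b (π x) < dH b z) ∧
    (x ∈ GH (Set.range p) → π x = x)

/-- Tangent directions at `c` of unit-speed geodesics contained in `M`. -/
def tangentDirs {d : ℕ} (M : Set (E d)) (c : E d) : Set (E d) :=
  {v | ∃ γ : ℝ → E d, IsUnitSpeedGeodesic γ ∧ Set.range γ ⊆ M ∧ γ 0 = c ∧ HasDerivAt γ v 0}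

/-- `x` and `y` lie on the same side of `L` inside the ball. -/
def SameSide {d : ℕ} (L : Set (E d)) (x y : E d) : Prop :=
  ∃ C : Set (E d), IsConnected C ∧ C ⊆ pball d \ L ∧ x ∈ C ∧ y ∈ C

/-- The (closed) half of `M` bounded by `P` that contains `b`. -/
def halfOf {d : ℕ} (M P : Set (E d)) (b : E d) : Set (E d) :=
  P ∪ connectedComponentIn (M \ P) b

/-- Hyperbolic length of a path `γ` with derivative `γ'` over `[a, b]`. -/
def hypLen {d : ℕ} (γ γ' : ℝ → E d) (a b : ℝ) : ℝ :=
  ∫ t in a..b, 2 * ‖γ' t‖ / (1 - ‖γ t‖ ^ 2)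

/-- `N ⊆ ℝ^d` is a `k`-dimensional topological submanifold (without boundary). -/
def IsTopSubmanifoldOfDim {d : ℕ} (k : ℕ) (N : Set (E d)) : Prop :=
  ∀ y ∈ N, ∃ U : Set (E d), IsOpen U ∧ y ∈ U ∧
    ∃ V : Set (EuclideanSpace ℝ (Fin k)), IsOpen V ∧ Nonempty (↥(U ∩ N) ≃ₜ ↥V)

/-- The model (closed) half-space of `ℝ^k`. -/
def modelHalfSpace (k : ℕ) : Set (EuclideanSpace ℝ (Fin k)) :=
  {v | ∀ i : Fin k, (i : ℕ) = 0 → 0 ≤ v i}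

/-- `N ⊆ ℝ^d` is a `k`-dimensional topological submanifold with boundary. -/
def IsTopSubmanifoldWithBdryOfDim {d : ℕ} (k : ℕ) (N : Set (E d)) : Prop :=
  ∀ y ∈ N, ∃ U : Set (E d), IsOpen U ∧ y ∈ U ∧
    ∃ V : Set (EuclideanSpace ℝ (Fin k)),
      (∃ W : Set (EuclideanSpace ℝ (Fin k)), IsOpen W ∧ V = W ∩ modelHalfSpace k) ∧
      Nonempty (↥(U ∩ N) ≃ₜ ↥V)

/-- Geodesically convex subset of the ball. -/
def GeodConvex {d : ℕ} (N : Set (E d)) : Prop :=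
  N ⊆ pball d ∧
    ∀ x ∈ N, ∀ y ∈ N, ∀ γ : ℝ → E d, IsUnitSpeedGeodesic γ →
      ∀ s t : ℝ, γ s = x → γ t = y → ∀ u ∈ Set.uIcc s t, γ u ∈ N

/-!
In the hyperboloid model, `cosh d(x, y)` is the Lorentz product `⟨x, y⟩` of the lifts. Let `p`, `q`
be the projections of `x`, `y` onto `M`. The geodesic through `p` and `q` lies in `M`, so the
first-order conditions of both projections hold along it; combined with the reverse
Cauchy–Schwarz inequality on the spacelike complement of `p` they give the quadrilateral inequality
`cosh d(x,p) · cosh d(y,q) · (cosh d(p,q) - 1) ≤ cosh d(x,y) - 1`.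
For `y = x + t v` and `q = π y`, both sides are `t²/2` times squared hyperbolic norms up to `o(t²)`,
and letting `t → 0` gives `cosh² d(x,M) · ‖dπ v‖² ≤ ‖v‖²`.
-/

section Hyperboloid

open Real

variable {d : ℕ}

def coshDist (x y : E d) : ℝ := 1 + 2 * ‖x - y‖ ^ 2 / ((1 - ‖x‖ ^ 2) * (1 - ‖y‖ ^ 2))

lemma dH_eq_arcosh_coshDist (x y : E d) : dH x y = Real.arcosh (coshDist x y) := rfl

lemma isOpen_pball : IsOpen (pball d) := isOpen_lt continuous_norm continuous_const

lemma one_sub_norm_sq_pos {x : E d} (hx : x ∈ pball d) : 0 < 1 - ‖x‖ ^ 2 := by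
  have : ‖x‖ < 1 := hx
  nlinarith [norm_nonneg x]

lemma one_le_coshDist {x y : E d} (hx : x ∈ pball d) (hy : y ∈ pball d) : 1 ≤ coshDist x y := by
  have := one_sub_norm_sq_pos hx
  have := one_sub_norm_sq_pos hy
  unfold coshDist
  have : 0 ≤ 2 * ‖x - y‖ ^ 2 / ((1 - ‖x‖ ^ 2) * (1 - ‖y‖ ^ 2)) := by positivity
  linarith

lemma one_lt_coshDist {x y : E d} (hx : x ∈ pball d) (hy : y ∈ pball d) (hxy : x ≠ y) :
    1 < coshDist x y := by
  have := one_sub_norm_sq_pos hx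
  have := one_sub_norm_sq_pos hy
  have := norm_sub_pos_iff.2 hxy
  unfold coshDist
  have : 0 < 2 * ‖x - y‖ ^ 2 / ((1 - ‖x‖ ^ 2) * (1 - ‖y‖ ^ 2)) := by positivity
  linarith

lemma coshDist_self (x : E d) : coshDist x x = 1 := by simp [coshDist]

lemma dH_nonneg {x y : E d} (hx : x ∈ pball d) (hy : y ∈ pball d) : 0 ≤ dH x y :=
  arcosh_nonneg (one_le_coshDist hx hy)

lemma cosh_dH {x y : E d} (hx : x ∈ pball d) (hy : y ∈ pball d) :
    cosh (dH x y) = coshDist x y :=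
  cosh_arcosh (one_le_coshDist hx hy)

lemma coshDist_le_of_isNearestPt {M : Set (E d)} (hM : M ⊆ pball d) {x m y : E d}
    (hx : x ∈ pball d) (hm : IsNearestPt M x m) (hy : y ∈ M) :
    coshDist x m ≤ coshDist x y := by
  rw [← cosh_dH hx (hM hm.1), ← cosh_dH hx (hM hy), cosh_le_cosh,
    abs_of_nonneg (dH_nonneg hx (hM hm.1)), abs_of_nonneg (dH_nonneg hx (hM hy))]
  exact hm.2 y hy

lemma cosh_sInf_dH_image {M : Set (E d)} {x m : E d} (hx : x ∈ pball d) (hm : m ∈ pball d)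
    (h : IsNearestPt M x m) : cosh (sInf (dH x '' M)) = coshDist x m := by
  have : IsLeast (dH x '' M) (dH x m) :=
    ⟨⟨m, h.1, rfl⟩, by rintro _ ⟨y, hy, rfl⟩; exact h.2 y hy⟩
  rw [this.csInf_eq, cosh_dH hx hm]

def lorentz : LinearMap.BilinForm ℝ (ℝ × E d) :=
  (LinearMap.mul ℝ ℝ).compl₁₂ (LinearMap.fst ℝ ℝ (E d)) (LinearMap.fst ℝ ℝ (E d)) -
    (innerₗ (E d)).compl₁₂ (LinearMap.snd ℝ ℝ (E d)) (LinearMap.snd ℝ ℝ (E d))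

lemma lorentz_apply (z w : ℝ × E d) : lorentz z w = z.1 * w.1 - inner ℝ z.2 w.2 := rfl

lemma lorentz_comm (z w : ℝ × E d) : lorentz z w = lorentz w z := by
  rw [lorentz_apply, lorentz_apply, real_inner_comm, mul_comm]

lemma lorentz_self (z : ℝ × E d) : lorentz z z = z.1 ^ 2 - ‖z.2‖ ^ 2 := by
  rw [lorentz_apply, real_inner_self_eq_norm_sq]
  ring

def toHyperboloid (x : E d) : ℝ × E d :=
  ((1 + ‖x‖ ^ 2) / (1 - ‖x‖ ^ 2), (2 / (1 - ‖x‖ ^ 2)) • x)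

def ofHyperboloid (z : ℝ × E d) : E d := (1 + z.1)⁻¹ • z.2

lemma lorentz_toHyperboloid {x y : E d} (hx : x ∈ pball d) (hy : y ∈ pball d) :
    lorentz (toHyperboloid x) (toHyperboloid y) = coshDist x y := by
  have := one_sub_norm_sq_pos hx
  have := one_sub_norm_sq_pos hy
  simp only [lorentz_apply, toHyperboloid, coshDist, real_inner_smul_left,
    real_inner_smul_right, norm_sub_sq_real]
  field_simp
  ring

lemma lorentz_toHyperboloid_self {x : E d} (hx : x ∈ pball d) :
    lorentz (toHyperboloid x) (toHyperboloid x) = 1 := by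
  rw [lorentz_toHyperboloid hx hx, coshDist_self]

lemma toHyperboloid_fst_pos {x : E d} (hx : x ∈ pball d) : 0 < (toHyperboloid x).1 := by
  have := one_sub_norm_sq_pos hx
  unfold toHyperboloid
  positivity

lemma ofHyperboloid_toHyperboloid {x : E d} (hx : x ∈ pball d) :
    ofHyperboloid (toHyperboloid x) = x := by
  have := one_sub_norm_sq_pos hx
  have h : 1 + (1 + ‖x‖ ^ 2) / (1 - ‖x‖ ^ 2) = 2 / (1 - ‖x‖ ^ 2) := by
    field_simp
    ring
  rw [ofHyperboloid, toHyperboloid, smul_smul, h, inv_mul_cancel₀ (by positivity), one_smul]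

lemma norm_ofHyperboloid_sq {z : ℝ × E d} (hz : lorentz z z = 1) (hz₁ : 0 < z.1) :
    ‖ofHyperboloid z‖ ^ 2 = (z.1 - 1) / (z.1 + 1) := by
  rw [lorentz_self] at hz
  rw [ofHyperboloid, norm_smul, mul_pow, norm_inv, Real.norm_eq_abs, inv_pow, sq_abs]
  field_simp
  linear_combination (-z.1 - 1) * hz

lemma ofHyperboloid_mem_pball {z : ℝ × E d} (hz : lorentz z z = 1) (hz₁ : 0 < z.1) :
    ofHyperboloid z ∈ pball d := by
  have h : ‖ofHyperboloid z‖ ^ 2 < 1 := by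
    rw [norm_ofHyperboloid_sq hz hz₁, div_lt_one (by linarith)]
    linarith
  show ‖ofHyperboloid z‖ < 1
  nlinarith [norm_nonneg (ofHyperboloid z)]

lemma toHyperboloid_ofHyperboloid {z : ℝ × E d} (hz : lorentz z z = 1) (hz₁ : 0 < z.1) :
    toHyperboloid (ofHyperboloid z) = z := by
  have hden : 1 - ‖ofHyperboloid z‖ ^ 2 = 2 / (z.1 + 1) := by
    rw [norm_ofHyperboloid_sq hz hz₁]
    field_simp
    ring
  refine Prod.ext ?_ ?_
  · rw [toHyperboloid, hden, norm_ofHyperboloid_sq hz hz₁]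
    field_simp
    ring
  · rw [toHyperboloid, hden, ofHyperboloid, smul_smul]
    convert one_smul ℝ z.2 using 2
    field_simp
    ring

lemma fst_pos_of_lorentz_pos {z w : ℝ × E d} (hz : lorentz z z = 1) (hw : lorentz w w = 1)
    (hw₁ : 0 < w.1) (hzw : 0 < lorentz z w) : 0 < z.1 := by
  rw [lorentz_self] at hz hw
  rw [lorentz_apply] at hzw
  have hcs := abs_real_inner_le_norm z.2 w.2
  have hw' : ‖w.2‖ < w.1 := by nlinarith [norm_nonneg w.2]
  by_contra! hz₁
  have hz' : ‖z.2‖ < -z.1 := by nlinarith [norm_nonneg z.2]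
  nlinarith [neg_abs_le (inner ℝ z.2 w.2), norm_nonneg z.2, norm_nonneg w.2]

def hyperbola (P V : ℝ × E d) (t : ℝ) : ℝ × E d := cosh t • P + sinh t • V

lemma hyperbola_zero (P V : ℝ × E d) : hyperbola P V 0 = P := by
  rw [hyperbola, cosh_zero, sinh_zero, one_smul, zero_smul, add_zero]

lemma lorentz_hyperbola {P V : ℝ × E d} (hPP : lorentz P P = 1) (hPV : lorentz P V = 0)
    (hVV : lorentz V V = -1) (s t : ℝ) :
    lorentz (hyperbola P V s) (hyperbola P V t) = cosh (s - t) := by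
  simp only [hyperbola, map_add, map_smul, LinearMap.add_apply, LinearMap.smul_apply, smul_eq_mul]
  rw [hPP, hPV, lorentz_comm V P, hPV, hVV, cosh_sub]
  ring

lemma lorentz_hyperbola_self {P V : ℝ × E d} (hPP : lorentz P P = 1) (hPV : lorentz P V = 0)
    (hVV : lorentz V V = -1) (t : ℝ) : lorentz (hyperbola P V t) (hyperbola P V t) = 1 := by
  rw [lorentz_hyperbola hPP hPV hVV, sub_self, cosh_zero]

lemma hyperbola_fst_pos {p : E d} (hp : p ∈ pball d) {V : ℝ × E d}
    (hPV : lorentz (toHyperboloid p) V = 0) (hVV : lorentz V V = -1) (t : ℝ) :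
    0 < (hyperbola (toHyperboloid p) V t).1 := by
  have hPP := lorentz_toHyperboloid_self hp
  refine fst_pos_of_lorentz_pos (lorentz_hyperbola_self hPP hPV hVV t) hPP
    (toHyperboloid_fst_pos hp) ?_
  have h := lorentz_hyperbola hPP hPV hVV t 0
  rw [hyperbola_zero, sub_zero] at h
  exact h ▸ cosh_pos t

lemma ofHyperboloid_hyperbola_mem_pball {p : E d} (hp : p ∈ pball d) {V : ℝ × E d}
    (hPV : lorentz (toHyperboloid p) V = 0) (hVV : lorentz V V = -1) (t : ℝ) :
    ofHyperboloid (hyperbola (toHyperboloid p) V t) ∈ pball d :=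
  ofHyperboloid_mem_pball (lorentz_hyperbola_self (lorentz_toHyperboloid_self hp) hPV hVV t)
    (hyperbola_fst_pos hp hPV hVV t)

lemma toHyperboloid_ofHyperboloid_hyperbola {p : E d} (hp : p ∈ pball d) {V : ℝ × E d}
    (hPV : lorentz (toHyperboloid p) V = 0) (hVV : lorentz V V = -1) (t : ℝ) :
    toHyperboloid (ofHyperboloid (hyperbola (toHyperboloid p) V t)) =
      hyperbola (toHyperboloid p) V t :=
  toHyperboloid_ofHyperboloid (lorentz_hyperbola_self (lorentz_toHyperboloid_self hp) hPV hVV t)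
    (hyperbola_fst_pos hp hPV hVV t)

lemma isUnitSpeedGeodesic_ofHyperboloid_hyperbola {p : E d} (hp : p ∈ pball d) {V : ℝ × E d}
    (hPV : lorentz (toHyperboloid p) V = 0) (hVV : lorentz V V = -1) :
    IsUnitSpeedGeodesic (ofHyperboloid ∘ hyperbola (toHyperboloid p) V) := by
  refine ⟨ofHyperboloid_hyperbola_mem_pball hp hPV hVV, fun s t => ?_⟩
  rw [Function.comp_apply, Function.comp_apply, dH_eq_arcosh_coshDist,
    ← lorentz_toHyperboloid (ofHyperboloid_hyperbola_mem_pball hp hPV hVV s)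
      (ofHyperboloid_hyperbola_mem_pball hp hPV hVV t),
    toHyperboloid_ofHyperboloid_hyperbola hp hPV hVV,
    toHyperboloid_ofHyperboloid_hyperbola hp hPV hVV,
    lorentz_hyperbola (lorentz_toHyperboloid_self hp) hPV hVV, ← cosh_abs,
    arcosh_cosh (abs_nonneg _)]

lemma exists_hyperbola_through {p q : E d} (hp : p ∈ pball d) (hq : q ∈ pball d) (hpq : p ≠ q) :
    ∃ V : ℝ × E d, lorentz (toHyperboloid p) V = 0 ∧ lorentz V V = -1 ∧
      hyperbola (toHyperboloid p) V (dH p q) = toHyperboloid q := by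
  set P := toHyperboloid p
  set Q := toHyperboloid q
  set δ := dH p q
  have hPP : lorentz P P = 1 := lorentz_toHyperboloid_self hp
  have hQQ : lorentz Q Q = 1 := lorentz_toHyperboloid_self hq
  have hPQ : lorentz P Q = cosh δ := by rw [lorentz_toHyperboloid hp hq, cosh_dH hp hq]
  have hs : sinh δ ≠ 0 := (sinh_pos_iff.2 (arcosh_pos (one_lt_coshDist hp hq hpq))).ne'
  refine ⟨(sinh δ)⁻¹ • (Q - cosh δ • P), ?_, ?_, ?_⟩
  · simp only [map_sub, map_smul, smul_eq_mul, hPP, hPQ]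
    ring
  · simp only [map_sub, map_smul, LinearMap.sub_apply, LinearMap.smul_apply, smul_eq_mul]
    rw [hPP, hQQ, hPQ, lorentz_comm Q P, hPQ]
    field_simp
    linear_combination -cosh_sq_sub_sinh_sq δ
  · rw [hyperbola, smul_smul, mul_inv_cancel₀ hs, one_smul, add_sub_cancel]

end Hyperboloid

section Projection

open Real

variable {d : ℕ}

lemma mul_sinh_add_mul_cosh_eq_zero {a b t₀ : ℝ}
    (h : ∀ t, a * cosh t₀ + b * sinh t₀ ≤ a * cosh t + b * sinh t) :
    a * sinh t₀ + b * cosh t₀ = 0 :=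
  IsLocalMin.hasDerivAt_eq_zero (f := fun t => a * cosh t + b * sinh t)
    (Filter.Eventually.of_forall h)
    (((hasDerivAt_cosh t₀).const_mul a).add ((hasDerivAt_sinh t₀).const_mul b))

lemma lorentz_self_nonpos_of_orthogonal {P Z : ℝ × E d} (hP : lorentz P P = 1)
    (hZ : lorentz Z P = 0) : lorentz Z Z ≤ 0 := by
  rw [lorentz_self] at hP ⊢
  rw [lorentz_apply, sub_eq_zero] at hZ
  have hcs : Z.1 ^ 2 * P.1 ^ 2 ≤ ‖Z.2‖ ^ 2 * ‖P.2‖ ^ 2 := by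
    rw [← mul_pow, hZ, ← mul_pow, ← sq_abs]
    exact pow_le_pow_left₀ (abs_nonneg _) (abs_real_inner_le_norm _ _) 2
  nlinarith [sq_nonneg ‖Z.2‖, sq_nonneg ‖P.2‖]

lemma lorentz_sq_le_of_orthogonal {P X Y : ℝ × E d} (hP : lorentz P P = 1)
    (hX : lorentz X P = 0) (hY : lorentz Y P = 0) :
    lorentz X Y ^ 2 ≤ lorentz X X * lorentz Y Y := by
  have hquad (r : ℝ) :
      0 ≤ -lorentz Y Y * (r * r) + -(2 * lorentz X Y) * r + -lorentz X X := by
    have hXrY : lorentz (X + r • Y) P = 0 := by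
      simp only [map_add, map_smul, LinearMap.add_apply, LinearMap.smul_apply, smul_eq_mul, hX, hY]
      ring
    have := lorentz_self_nonpos_of_orthogonal hP hXrY
    simp only [map_add, map_smul, LinearMap.add_apply, LinearMap.smul_apply, smul_eq_mul,
      lorentz_comm Y X] at this
    linarith
  have := discrim_le_zero hquad
  rw [discrim] at this
  linarith

lemma lorentz_quadrilateral {P V X Y : ℝ × E d} {A H c s : ℝ}
    (hPP : lorentz P P = 1) (hPV : lorentz P V = 0) (hVV : lorentz V V = -1)
    (hXX : lorentz X X = 1) (hYY : lorentz Y Y = 1) (hcs : c ^ 2 - s ^ 2 = 1)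
    (hA : 1 ≤ A) (hH : 1 ≤ H) (hXP : lorentz X P = A) (hXV : lorentz X V = 0)
    (hYP : lorentz Y P = c * H) (hYV : lorentz Y V = -(s * H)) :
    A * H * (c - 1) ≤ lorentz X Y - 1 := by
  have hVP : lorentz V P = 0 := by rw [lorentz_comm, hPV]
  have hPX : lorentz P X = A := by rw [lorentz_comm, hXP]
  have hPY : lorentz P Y = c * H := by rw [lorentz_comm, hYP]
  have hVY : lorentz V Y = -(s * H) := by rw [lorentz_comm, hYV]
  set X' := X - A • P
  set Y' := Y - (c * H) • P - (s * H) • V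
  have hX'P : lorentz X' P = 0 := by
    simp only [X', map_sub, map_smul, LinearMap.sub_apply, LinearMap.smul_apply, smul_eq_mul,
      hXP, hPP]
    ring
  have hY'P : lorentz Y' P = 0 := by
    simp only [Y', map_sub, map_smul, LinearMap.sub_apply, LinearMap.smul_apply, smul_eq_mul,
      hYP, hPP, hVP]
    ring
  have hX'X' : lorentz X' X' = 1 - A ^ 2 := by
    simp only [X', map_sub, map_smul, LinearMap.sub_apply, LinearMap.smul_apply, smul_eq_mul,
      hXX, hXP, hPX, hPP]
    ring
  have hY'Y' : lorentz Y' Y' = 1 - H ^ 2 := by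
    simp only [Y', map_sub, map_smul, LinearMap.sub_apply, LinearMap.smul_apply, smul_eq_mul,
      hYY, hYP, hYV, hPY, hVY, hPP, hPV, hVP, hVV]
    linear_combination (-H ^ 2) * hcs
  have hX'Y' : lorentz X' Y' = lorentz X Y - A * c * H := by
    simp only [X', Y', map_sub, map_smul, LinearMap.sub_apply, LinearMap.smul_apply, smul_eq_mul,
      hXP, hXV, hPY, hPP, hPV]
    ring
  have hcs' := lorentz_sq_le_of_orthogonal hPP hX'P hY'P
  rw [hX'X', hY'Y', hX'Y'] at hcs'
  -- `(A² - 1)(H² - 1) ≤ (AH - 1)²` bounds the orthogonal part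
  nlinarith [sq_nonneg (A - H), mul_nonneg (sub_nonneg.2 hA) (sub_nonneg.2 hH)]

lemma coshDist_ofHyperboloid_hyperbola {z p : E d} (hz : z ∈ pball d) (hp : p ∈ pball d)
    {V : ℝ × E d} (hPV : lorentz (toHyperboloid p) V = 0) (hVV : lorentz V V = -1) (t : ℝ) :
    coshDist z ((ofHyperboloid ∘ hyperbola (toHyperboloid p) V) t) =
      lorentz (toHyperboloid z) (toHyperboloid p) * cosh t +
        lorentz (toHyperboloid z) V * sinh t := by
  rw [Function.comp_apply,
    ← lorentz_toHyperboloid hz (ofHyperboloid_hyperbola_mem_pball hp hPV hVV t),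
    toHyperboloid_ofHyperboloid_hyperbola hp hPV hVV]
  simp only [hyperbola, map_add, map_smul, smul_eq_mul]
  ring

theorem coshDist_mul_coshDist_mul_sub_one_le {M : Set (E d)} (hM : TotGeodesic M)
    {x y p q : E d} (hx : x ∈ pball d) (hy : y ∈ pball d)
    (hp : IsNearestPt M x p) (hq : IsNearestPt M y q) :
    coshDist x p * coshDist y q * (coshDist p q - 1) ≤ coshDist x y - 1 := by
  have hpB := hM.1 hp.1
  have hqB := hM.1 hq.1
  rcases eq_or_ne p q with rfl | hpq
  · rw [coshDist_self, sub_self, mul_zero, sub_nonneg]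
    exact one_le_coshDist hx hy
  obtain ⟨V, hPV, hVV, hQ⟩ := exists_hyperbola_through hpB hqB hpq
  have hγ := isUnitSpeedGeodesic_ofHyperboloid_hyperbola hpB hPV hVV
  have hdist {z : E d} (hz : z ∈ pball d) := coshDist_ofHyperboloid_hyperbola hz hpB hPV hVV
  set P := toHyperboloid p
  set δ := dH p q
  set γ := ofHyperboloid ∘ hyperbola P V
  have hγ0 : γ 0 = p := by
    show ofHyperboloid (hyperbola P V 0) = p
    rw [hyperbola_zero, ofHyperboloid_toHyperboloid hpB]
  have hγδ : γ δ = q := by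
    show ofHyperboloid (hyperbola P V δ) = q
    rw [hQ, ofHyperboloid_toHyperboloid hqB]
  have hγM : range γ ⊆ M := hM.2 p hp.1 q hq.1 hpq _ ⟨γ, hγ, rfl⟩ ⟨0, hγ0⟩ ⟨δ, hγδ⟩
  have hmin {z m : E d} (hz : z ∈ pball d) (hm : IsNearestPt M z m) (t₀ : ℝ) (hγm : γ t₀ = m) :
      lorentz (toHyperboloid z) P * sinh t₀ + lorentz (toHyperboloid z) V * cosh t₀ = 0 := by
    refine mul_sinh_add_mul_cosh_eq_zero fun t => ?_
    rw [← hdist hz, ← hdist hz, hγm]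
    exact coshDist_le_of_isNearestPt hM.1 hz hm (hγM ⟨t, rfl⟩)
  have hxP : lorentz (toHyperboloid x) P = coshDist x p := by
    rw [lorentz_toHyperboloid hx hpB]
  have hxV : lorentz (toHyperboloid x) V = 0 := by
    simpa using hmin hx hp 0 hγ0
  have hyδ := hmin hy hq δ hγδ
  have hyq : lorentz (toHyperboloid y) P * cosh δ + lorentz (toHyperboloid y) V * sinh δ =
      coshDist y q := by rw [← hdist hy, hγδ]
  have hcs := cosh_sq_sub_sinh_sq δ
  rw [← cosh_dH hpB hqB, ← lorentz_toHyperboloid hx hy]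
  refine lorentz_quadrilateral (lorentz_toHyperboloid_self hpB) hPV hVV
    (lorentz_toHyperboloid_self hx) (lorentz_toHyperboloid_self hy) hcs
    (one_le_coshDist hx hpB) (one_le_coshDist hy hqB) hxP hxV ?_ ?_
  · linear_combination cosh δ * hyq - sinh δ * hyδ - lorentz (toHyperboloid y) P * hcs
  · linear_combination cosh δ * hyδ - sinh δ * hyq - lorentz (toHyperboloid y) V * hcs

end Projection

section Infinitesimal

open Filter Topology

variable {d : ℕ}

lemma Filter.Tendsto.coshDist {α : Type*} {l : Filter α} {f g : α → E d} {a b : E d}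
    (hf : Tendsto f l (𝓝 a)) (hg : Tendsto g l (𝓝 b)) (ha : a ∈ pball d) (hb : b ∈ pball d) :
    Tendsto (fun t => coshDist (f t) (g t)) l (𝓝 (coshDist a b)) :=
  tendsto_const_nhds.add <| (((hf.sub hg).norm.pow 2).const_mul 2).div
    ((tendsto_const_nhds.sub (hf.norm.pow 2)).mul (tendsto_const_nhds.sub (hg.norm.pow 2)))
    (mul_pos (one_sub_norm_sq_pos ha) (one_sub_norm_sq_pos hb)).ne'

lemma tendsto_coshDist_sub_one_div_sq {f : ℝ → E d} {a v : E d} (hf : HasDerivAt f v 0)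
    (hfa : f 0 = a) (ha : a ∈ pball d) :
    Tendsto (fun t => (coshDist a (f t) - 1) / t ^ 2) (𝓝[≠] 0)
      (𝓝 ((2 * ‖v‖ / (1 - ‖a‖ ^ 2)) ^ 2 / 2)) := by
  have hslope : slope f 0 = fun t => t⁻¹ • (f t - a) :=
    funext fun t => by rw [slope_def_module, hfa, sub_zero]
  have hf' : Tendsto f (𝓝[≠] 0) (𝓝 a) :=
    hfa ▸ hf.continuousAt.tendsto.mono_left nhdsWithin_le_nhds
  have ha' := one_sub_norm_sq_pos ha
  have hlim := (((hslope ▸ hasDerivAt_iff_tendsto_slope.1 hf).norm.pow 2).const_mul 2).div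
    (tendsto_const_nhds.mul (tendsto_const_nhds.sub (hf'.norm.pow 2))) (mul_pos ha' ha').ne'
  convert hlim using 2 with t
  · rw [Pi.div_apply, coshDist, add_sub_cancel_left, norm_smul, mul_pow, norm_inv,
      Real.norm_eq_abs, inv_pow, sq_abs, norm_sub_rev]
    ring
  · field_simp

lemma mul_coshDist_le_of_eventually_le {x p v w : E d} {y q : ℝ → E d} (hx : x ∈ pball d)
    (hp : p ∈ pball d) (hy : HasDerivAt y v 0) (hy0 : y 0 = x) (hq : HasDerivAt q w 0)
    (hq0 : q 0 = p) (h : ∀ᶠ t in 𝓝 0,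
      coshDist x p * coshDist (y t) (q t) * (coshDist p (q t) - 1) ≤ coshDist x (y t) - 1) :
    2 * ‖w‖ / (1 - ‖p‖ ^ 2) * coshDist x p ≤ 2 * ‖v‖ / (1 - ‖x‖ ^ 2) := by
  have h' : ∀ᶠ t in 𝓝[≠] 0, coshDist x p * coshDist (y t) (q t) *
      ((coshDist p (q t) - 1) / t ^ 2) ≤ (coshDist x (y t) - 1) / t ^ 2 := by
    filter_upwards [h.filter_mono nhdsWithin_le_nhds] with t ht
    rw [← mul_div_assoc]
    exact div_le_div_of_nonneg_right ht (sq_nonneg t)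
  have hcont {f : ℝ → E d} {v a : E d} (hf : HasDerivAt f v 0) (hfa : f 0 = a) :
      Tendsto f (𝓝[≠] 0) (𝓝 a) :=
    hfa ▸ hf.continuousAt.tendsto.mono_left nhdsWithin_le_nhds
  have hlim := le_of_tendsto_of_tendsto
    ((tendsto_const_nhds.mul ((hcont hy hy0).coshDist (hcont hq hq0) hx hp)).mul
      (tendsto_coshDist_sub_one_div_sq hq hq0 hp))
    (tendsto_coshDist_sub_one_div_sq hy hy0 hx) h'
  have hv : 0 ≤ 2 * ‖v‖ / (1 - ‖x‖ ^ 2) := div_nonneg (by positivity) (one_sub_norm_sq_pos hx).le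
  exact le_of_pow_le_pow_left₀ two_ne_zero hv (by linear_combination 2 * hlim)

end Infinitesimal

/-- Under the geodesic projection `π^G_M` onto a totally geodesic
submanifold `M ⊆ ℍ^d`, every tangent vector `v` at `x` gets at least
`cosh(d_ℍ(x,M))` times shorter: `‖dπ^G_M(v)‖_ℍ ≤ ‖v‖_ℍ / cosh(d_ℍ(x,M))`, where the
hyperbolic norm of a tangent vector `w` at a point `y` is `2‖w‖/(1 - ‖y‖²)` and
`d_ℍ(x,M) = inf_{m ∈ M} d_ℍ(x,m)`. -/
theorem geodesic_proj_infinitesimal_shrink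
    {d : ℕ} (M : Set (E d)) (hM : TotGeodesic M)
    (π : E d → E d) (hπ : IsGeodProj M π)
    (x : E d) (hx : x ∈ pball d) (hdiff : DifferentiableAt ℝ π x) (v : E d) :
    2 * ‖fderiv ℝ π x v‖ / (1 - ‖π x‖ ^ 2) ≤
      (2 * ‖v‖ / (1 - ‖x‖ ^ 2)) / Real.cosh (sInf (dH x '' M)) := by
  have hp : π x ∈ pball d := hM.1 (hπ x hx).1
  rw [cosh_sInf_dH_image hx hp (hπ x hx), le_div_iff₀ (by linarith [one_le_coshDist hx hp])]
  set y : ℝ → E d := fun t => x + t • v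
  have hy0 : y 0 = x := by simp [y]
  have hy : HasDerivAt y v 0 := by
    have := ((hasDerivAt_id (0 : ℝ)).smul_const v).const_add x
    rwa [one_smul] at this
  have hπy : HasDerivAt (π ∘ y) (fderiv ℝ π x v) 0 :=
    hdiff.hasFDerivAt.comp_hasDerivAt_of_eq 0 hy hy0.symm
  refine mul_coshDist_le_of_eventually_le hx hp hy hy0 hπy (by simp [hy0]) ?_
  filter_upwards [hy.continuousAt.preimage_mem_nhds (hy0 ▸ isOpen_pball.mem_nhds hx)] with t hyt
  exact coshDist_mul_coshDist_mul_sub_one_le hM hx hyt (hπ x hx) (hπ _ hyt)
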